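/- arXiv:2505.23974 — 12 statements merged into one kernel-verified Lean document; each statement's English description precedes it below -/
import Mathlib

section
/- Let D^∞ = (d_1, d_2, ...) be a nondecreasing sequence of positive integers tending to infinity, and suppose β and β* are progression parameters of D^∞ with y = r(D^∞, β) and y* = r(D^∞, β*). Then β + β* is a progression parameter of D^∞ and r(D^∞, β + β*) = y + y*. -/
/-! Monotonicity and `d → ∞` make `{i ≥ 1 : d i ≤ β}` an initial segment `[1, r(β)]`, so that
`d i ≤ β ↔ i ≤ r(β)` for `i ≥ 1`. If `β*` is a progression parameter, then every index
`i > r(β*)` is `r(β*) + j` with `d i = d j + β*`, hence `d i ≤ β + β* ↔ j ≤ r(β)`; this gives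
`r(β + β*) = r(β) + r(β*)` for every `β`. Applying the two shifts one after the other shows
that `β + β*` is again a progression parameter. -/

/-- `r(D^∞, β) = #{i ≥ 1 : d_i ≤ β}`. -/
noncomputable def rD (d : ℕ → ℕ) (β : ℕ) : ℕ := Set.ncard {i : ℕ | 1 ≤ i ∧ d i ≤ β}

/-- `β` is a progression parameter of `D^∞` if `β > 0` and
`d (y + i) = d i + β` for all `i ≥ 1`, where `y = r(D^∞, β)`. -/
def IsProgParam (d : ℕ → ℕ) (β : ℕ) : Prop :=
  0 < β ∧ ∀ i, 1 ≤ i → d (rD d β + i) = d i + β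

open Filter

section

variable {d : ℕ → ℕ}

lemma rD_eq_of_forall_le_iff {β n : ℕ} (h : ∀ i, 1 ≤ i → (d i ≤ β ↔ i ≤ n)) : rD d β = n := by
  have hset : {i : ℕ | 1 ≤ i ∧ d i ≤ β} = Set.Icc 1 n :=
    Set.ext fun i => and_congr_right (h i)
  rw [rD, hset, Set.ncard_Icc_nat, Nat.add_sub_cancel]

lemma le_iff_le_rD (hmono : MonotoneOn d (Set.Ici 1)) (htend : Tendsto d atTop atTop) (β : ℕ)
    {i : ℕ} (hi : 1 ≤ i) : d i ≤ β ↔ i ≤ rD d β := by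
  have hex : ∃ n, β < d (n + 1) :=
    ((htend.comp (tendsto_add_atTop_nat 1)).eventually_gt_atTop β).exists
  classical
  suffices hN : ∀ k, 1 ≤ k → (d k ≤ β ↔ k ≤ Nat.find hex) by
    rw [rD_eq_of_forall_le_iff hN]
    exact hN i hi
  intro k hk
  constructor
  · intro hle
    by_contra! hlt
    have hfind : β < d (Nat.find hex + 1) := Nat.find_spec hex
    have := hmono (Set.mem_Ici.2 (Nat.le_add_left 1 _)) (Set.mem_Ici.2 hk) hlt
    omega
  · intro hle
    have := Nat.find_min hex (show k - 1 < Nat.find hex by omega)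
    rwa [Nat.sub_add_cancel hk, not_lt] at this

lemma rD_add_of_isProgParam (hmono : MonotoneOn d (Set.Ici 1)) (htend : Tendsto d atTop atTop)
    (β : ℕ) {βs : ℕ} (hβs : IsProgParam d βs) : rD d (β + βs) = rD d β + rD d βs := by
  refine rD_eq_of_forall_le_iff fun i hi => ?_
  rcases le_or_gt i (rD d βs) with hle | hlt
  · have := (le_iff_le_rD hmono htend βs hi).2 hle
    exact iff_of_true (by omega) (by omega)
  · obtain ⟨j, hj, rfl⟩ : ∃ j, 1 ≤ j ∧ i = rD d βs + j := ⟨i - rD d βs, by omega, by omega⟩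
    rw [hβs.2 j hj, Nat.add_le_add_iff_right, le_iff_le_rD hmono htend β hj]
    omega

end

theorem progParam_add_general (d : ℕ → ℕ)
    (hmono : ∀ i, 1 ≤ i → d i ≤ d (i + 1))
    (htend : Filter.Tendsto d Filter.atTop Filter.atTop)
    (β βs : ℕ) (hβ : IsProgParam d β) (hβs : IsProgParam d βs) :
    IsProgParam d (β + βs) ∧ rD d (β + βs) = rD d β + rD d βs := by
  have hmono' : MonotoneOn d (Set.Ici 1) :=
    monotoneOn_of_le_add_one Set.ordConnected_Ici fun i _ hi _ => hmono i hi
  have hr := rD_add_of_isProgParam hmono' htend β hβs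
  refine ⟨⟨Nat.add_pos_left hβ.1 βs, fun i hi => ?_⟩, hr⟩
  rw [hr, add_assoc, hβ.2 (rD d βs + i) (Nat.le_add_left_of_le hi), hβs.2 i hi]
  omega

/-- The sum of two progression parameters is a progression parameter, with
`r(D^∞, β + β*) = r(D^∞, β) + r(D^∞, β*)`. -/
theorem progParam_add (d : ℕ → ℕ)
    (hpos : ∀ i, 1 ≤ i → 0 < d i)
    (hmono : ∀ i, 1 ≤ i → d i ≤ d (i + 1))
    (htend : Filter.Tendsto d Filter.atTop Filter.atTop)
    (β βs : ℕ) (hβ : IsProgParam d β) (hβs : IsProgParam d βs) :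
    IsProgParam d (β + βs) ∧ rD d (β + βs) = rD d β + rD d βs :=
  progParam_add_general d hmono htend β βs hβ hβs
end

section
/- Let D^∞ = (d_1, d_2, ...) be a nondecreasing sequence of positive integers tending to infinity, and suppose β and β* are progression parameters of D^∞ with β* > β, y = r(D^∞, β), y* = r(D^∞, β*). Then β* − β is a progression parameter of D^∞ and r(D^∞, β* − β) = y* − y. -/
lemma mono2 (d : ℕ → ℕ) (hmono : ∀ i, 1 ≤ i → d i ≤ d (i + 1)) :
    ∀ i j, 1 ≤ i → i ≤ j → d i ≤ d j := by
  intro i j hi hij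
  induction j with
  | zero => omega
  | succ n ih =>
    rcases Nat.lt_or_ge i (n + 1) with h | h
    · exact le_trans (ih (by omega)) (hmono n (by omega))
    · have : i = n + 1 := by omega
      simp [this]

lemma ncard_Icc_one (m : ℕ) : (Set.Icc 1 m).ncard = m := by
  rw [← Finset.coe_Icc, Set.ncard_coe_finset, Nat.card_Icc]
  omega

lemma rD_spec (d : ℕ → ℕ) (hmono : ∀ i, 1 ≤ i → d i ≤ d (i + 1))
    (htend : Filter.Tendsto d Filter.atTop Filter.atTop) (β : ℕ) :
    ∀ j, 1 ≤ j → (d j ≤ β ↔ j ≤ rD d β) := by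
  have hm := mono2 d hmono
  obtain ⟨N, hN⟩ := Filter.eventually_atTop.mp (Filter.tendsto_atTop.mp htend (β + 1))
  have hfin : {i : ℕ | 1 ≤ i ∧ d i ≤ β}.Finite := by
    apply (Set.finite_Iio N).subset
    intro x hx
    simp only [Set.mem_Iio]
    by_contra h
    have := hN x (by omega)
    exact absurd hx.2 (by omega)
  by_cases hne : {i : ℕ | 1 ≤ i ∧ d i ≤ β}.Nonempty
  · have hFne : hfin.toFinset.Nonempty := by
      rwa [Set.Finite.toFinset_nonempty]
    set m := hfin.toFinset.max' hFne with hm'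
    have hmem : ∀ x, x ∈ hfin.toFinset ↔ (1 ≤ x ∧ d x ≤ β) := by
      intro x; rw [Set.Finite.mem_toFinset]; rfl
    have hmS : 1 ≤ m ∧ d m ≤ β := (hmem m).mp (hfin.toFinset.max'_mem hFne)
    have hSeq : {i : ℕ | 1 ≤ i ∧ d i ≤ β} = Set.Icc 1 m := by
      ext x
      simp only [Set.mem_setOf_eq, Set.mem_Icc]
      constructor
      · intro hx
        exact ⟨hx.1, hfin.toFinset.le_max' x ((hmem x).mpr hx)⟩
      · intro hx
        exact ⟨hx.1, le_trans (hm x m hx.1 hx.2) hmS.2⟩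
    have hr : rD d β = m := by rw [rD, hSeq, ncard_Icc_one]
    intro j hj
    rw [hr]
    constructor
    · intro hdj
      have : j ∈ Set.Icc 1 m := by rw [← hSeq]; exact ⟨hj, hdj⟩
      exact this.2
    · intro hjm
      exact le_trans (hm j m hj hjm) hmS.2
  · have hS : {i : ℕ | 1 ≤ i ∧ d i ≤ β} = ∅ := Set.not_nonempty_iff_eq_empty.mp hne
    have hr : rD d β = 0 := by rw [rD, hS, Set.ncard_empty]
    intro j hj
    rw [hr]
    constructor
    · intro hdj
      exact absurd (Set.mem_setOf_eq ▸ ⟨hj, hdj⟩ : j ∈ {i : ℕ | 1 ≤ i ∧ d i ≤ β}) (by rw [hS]; simp)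
    · omega

/-- The difference of two progression parameters `β* > β` is a progression parameter, with
`r(D^∞, β* − β) = r(D^∞, β*) − r(D^∞, β)`. -/
theorem progParam_sub (d : ℕ → ℕ)
    (hpos : ∀ i, 1 ≤ i → 0 < d i)
    (hmono : ∀ i, 1 ≤ i → d i ≤ d (i + 1))
    (htend : Filter.Tendsto d Filter.atTop Filter.atTop)
    (β βs : ℕ) (hβ : IsProgParam d β) (hβs : IsProgParam d βs) (hlt : β < βs) :
    IsProgParam d (βs - β) ∧ rD d β ≤ rD d βs ∧ rD d (βs - β) = rD d βs - rD d β := by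
  set y := rD d β with hy
  set ys := rD d βs with hys
  have specβ := rD_spec d hmono htend β
  have specβs := rD_spec d hmono htend βs
  have hyys : y ≤ ys := by
    rcases Nat.eq_zero_or_pos y with h | h
    · omega
    · have hdy : d y ≤ β := (specβ y h).mpr le_rfl
      exact (specβs y h).mp (le_trans hdy (le_of_lt hlt))
  have hγ : ∀ j, 1 ≤ j → (d j ≤ βs - β ↔ j ≤ ys - y) := by
    intro j hj
    have h1 : d (y + j) = d j + β := hβ.2 j hj
    have h2 : d (y + j) ≤ βs ↔ y + j ≤ ys := specβs (y + j) (by omega)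
    rw [h1] at h2
    omega
  have hrγ : rD d (βs - β) = ys - y := by
    rw [rD]
    have : {i : ℕ | 1 ≤ i ∧ d i ≤ βs - β} = Set.Icc 1 (ys - y) := by
      ext x
      simp only [Set.mem_setOf_eq, Set.mem_Icc]
      constructor
      · intro hx; exact ⟨hx.1, (hγ x hx.1).mp hx.2⟩
      · intro hx; exact ⟨hx.1, (hγ x hx.1).mpr hx.2⟩
    rw [this, ncard_Icc_one]
  refine ⟨⟨by omega, ?_⟩, hyys, hrγ⟩
  intro i hi
  rw [hrγ]
  have h1 : d (y + (ys - y + i)) = d (ys - y + i) + β := hβ.2 _ (by omega)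
  have h2 : d (ys + i) = d i + βs := hβs.2 i hi
  have h3 : y + (ys - y + i) = ys + i := by omega
  rw [h3, h2] at h1
  omega
end

section
/- Let D^∞ = (d_1, d_2, ...) be a nondecreasing sequence of positive integers tending to infinity that admits at least one progression parameter, and let β* be the least progression parameter. Then a positive integer β is a progression parameter of D^∞ if and only if β = x·β* for some positive integer x; moreover r(D^∞, x·β*) = x·r(D^∞, β*) for all x ≥ 1. -/
/-- If `β*` is the least progression parameter of `D^∞`, then a positive integer `β`
is a progression parameter iff `β = x·β*` for some `x > 0`, and
`r(D^∞, x·β*) = x·r(D^∞, β*)` for all `x ≥ 1`. -/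
theorem progParam_iff_mul_least (d : ℕ → ℕ)
    (hpos : ∀ i, 1 ≤ i → 0 < d i)
    (hmono : ∀ i, 1 ≤ i → d i ≤ d (i + 1))
    (htend : Filter.Tendsto d Filter.atTop Filter.atTop)
    (βs : ℕ) (hβs : IsProgParam d βs)
    (hleast : ∀ β, IsProgParam d β → βs ≤ β) :
    (∀ β : ℕ, IsProgParam d β ↔ ∃ x : ℕ, 0 < x ∧ β = x * βs) ∧
    (∀ x : ℕ, 1 ≤ x → rD d (x * βs) = x * rD d βs) := by
  obtain ⟨hβs_pos, hβs_prog⟩ := hβs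
  -- monotonicity on [1, ∞)
  have mono : ∀ i j, 1 ≤ i → i ≤ j → d i ≤ d j := by
    intro i j hi hij
    induction hij with
    | refl => exact le_rfl
    | @step k hk ih =>
        exact ih.trans (hmono k (le_trans hi hk))
  -- finiteness of the counting set
  have hfin : ∀ β, {i : ℕ | 1 ≤ i ∧ d i ≤ β}.Finite := by
    intro β
    obtain ⟨N, hN⟩ := Filter.eventually_atTop.mp
      (htend.eventually (Filter.eventually_gt_atTop β))
    apply (Set.finite_Iio N).subset
    intro i ⟨hi1, hi2⟩
    by_contra hc
    exact absurd hi2 (not_le.mpr (hN i (by simpa using hc)))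
  -- rD is determined by an initial-segment characterization
  have r_eq : ∀ β n, (∀ i, 1 ≤ i → (d i ≤ β ↔ i ≤ n)) → rD d β = n := by
    intro β n h
    have hset : {i : ℕ | 1 ≤ i ∧ d i ≤ β} = Set.Icc 1 n := by
      ext i
      simp only [Set.mem_setOf_eq, Set.mem_Icc]
      constructor
      · rintro ⟨h1, h2⟩; exact ⟨h1, (h i h1).mp h2⟩
      · rintro ⟨h1, h2⟩; exact ⟨h1, (h i h1).mpr h2⟩
    rw [rD, hset, ← Finset.coe_Icc, Set.ncard_coe_finset, Nat.card_Icc]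
    omega
  -- key initial segment property
  have key : ∀ β i, 1 ≤ i → (d i ≤ β ↔ i ≤ rD d β) := by
    intro β
    have hf := hfin β
    by_cases hS : {i : ℕ | 1 ≤ i ∧ d i ≤ β}.Nonempty
    · have hmem := hS.csSup_mem hf
      have hiff : ∀ i, 1 ≤ i →
          (d i ≤ β ↔ i ≤ sSup {i : ℕ | 1 ≤ i ∧ d i ≤ β}) := by
        intro i hi
        constructor
        · intro h; exact le_csSup hf.bddAbove ⟨hi, h⟩
        · intro h; exact le_trans (mono i _ hi h) hmem.2
      have hr := r_eq β _ hiff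
      intro i hi; rw [hr]; exact hiff i hi
    · rw [Set.not_nonempty_iff_eq_empty] at hS
      have hiff : ∀ i, 1 ≤ i → (d i ≤ β ↔ i ≤ 0) := by
        intro i hi
        constructor
        · intro h
          have hmem : i ∈ {i : ℕ | 1 ≤ i ∧ d i ≤ β} := ⟨hi, h⟩
          rw [hS] at hmem
          exact absurd hmem (Set.notMem_empty i)
        · omega
      have hr := r_eq β 0 hiff
      intro i hi; rw [hr]; exact hiff i hi
  -- iterated shift
  have shiftk : ∀ k i, 1 ≤ i → d (k * rD d βs + i) = d i + k * βs := by
    intro k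
    induction k with
    | zero => intro i _; simp
    | succ k ih =>
        intro i hi
        have h1 : d (rD d βs + (k * rD d βs + i)) = d (k * rD d βs + i) + βs :=
          hβs_prog _ (by omega)
        have h2 := ih i hi
        have h3 : (k + 1) * rD d βs + i = rD d βs + (k * rD d βs + i) := by ring
        rw [h3, h1, h2]; ring
  -- r(x βs) = x r(βs)
  have r_mul : ∀ k, 1 ≤ k → rD d (k * βs) = k * rD d βs := by
    intro k hk
    apply r_eq
    intro i hi
    constructor
    · intro h
      by_contra hc
      push_neg at hc
      obtain ⟨j, hj1, hj2⟩ : ∃ j, 1 ≤ j ∧ i = k * rD d βs + j :=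
        ⟨i - k * rD d βs, by omega, by omega⟩
      rw [hj2, shiftk k j hj1] at h
      have := hpos j hj1
      omega
    · intro h
      have hy : 1 ≤ rD d βs := by
        rcases Nat.eq_zero_or_pos (rD d βs) with h0 | h0
        · rw [h0, Nat.mul_zero] at h; omega
        · exact h0
      have h1 : d i ≤ d (k * rD d βs) := mono i _ hi h
      have h2 : d (k * rD d βs) ≤ k * βs := by
        obtain ⟨k', rfl⟩ : ∃ k', k = k' + 1 := ⟨k - 1, by omega⟩
        have hs := shiftk k' (rD d βs) hy
        have hd : d (rD d βs) ≤ βs := (key βs _ hy).mpr le_rfl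
        have heq : (k' + 1) * rD d βs = k' * rD d βs + rD d βs := by ring
        have heq2 : (k' + 1) * βs = βs + k' * βs := by ring
        rw [heq, hs, heq2]
        omega
      exact h1.trans h2
  -- r is monotone
  have r_mono : ∀ β β', β ≤ β' → rD d β ≤ rD d β' := by
    intro β β' hb
    rcases Nat.eq_zero_or_pos (rD d β) with h0 | h0
    · omega
    · have h1 := (key β (rD d β) h0).mpr le_rfl
      exact (key β' (rD d β) h0).mp (h1.trans hb)
  -- if β is a parameter and β > βs, then β - βs is a parameter
  have step : ∀ β, IsProgParam d β → βs < β → IsProgParam d (β - βs) := by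
    rintro β ⟨hβpos, hβprog⟩ hlt
    have hyz : rD d βs ≤ rD d β := r_mono βs β hlt.le
    have hr : rD d (β - βs) = rD d β - rD d βs := by
      apply r_eq
      intro i hi
      constructor
      · intro h
        have h2 : d (rD d βs + i) = d i + βs := hβs_prog i hi
        have h3 : d (rD d βs + i) ≤ β := by omega
        have h4 := (key β (rD d βs + i) (by omega)).mp h3
        omega
      · intro h
        have h2 : d (rD d βs + i) = d i + βs := hβs_prog i hi
        have h3 : d (rD d βs + i) ≤ β :=
          (key β (rD d βs + i) (by omega)).mpr (by omega)
        omega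
    constructor
    · omega
    · intro i hi
      rw [hr]
      have h1 : d (rD d βs + ((rD d β - rD d βs) + i)) =
          d ((rD d β - rD d βs) + i) + βs := hβs_prog _ (by omega)
      have h2 : rD d βs + ((rD d β - rD d βs) + i) = rD d β + i := by omega
      have h3 : d (rD d β + i) = d i + β := hβprog i hi
      rw [h2, h3] at h1
      omega
  -- converse by strong induction
  have conv : ∀ β, IsProgParam d β → ∃ x : ℕ, 0 < x ∧ β = x * βs := by
    intro β
    induction β using Nat.strong_induction_on with
    | _ β ih =>
        intro hβ
        have hle : βs ≤ β := hleast β hβ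
        rcases eq_or_lt_of_le hle with heq | hlt
        · exact ⟨1, one_pos, by omega⟩
        · obtain ⟨x, hx, hxe⟩ := ih (β - βs) (by omega) (step β hβ hlt)
          exact ⟨x + 1, by omega, by rw [add_mul, one_mul]; omega⟩
  refine ⟨fun β => ⟨conv β, ?_⟩, fun x hx => r_mul x hx⟩
  rintro ⟨x, hx, rfl⟩
  refine ⟨Nat.mul_pos hx hβs_pos, fun i hi => ?_⟩
  rw [r_mul x hx]
  exact shiftk x i hi
end

section
/- Let D^∞ = (d_1, d_2, ...) be a nondecreasing sequence of positive integers with d_i → ∞, let α > 0 be a progression parameter of D^∞, and set γ = r(D^∞, α). If m, β, r are positive integers with m·β = α, m·r = γ, and d_{r+i} = d_i + β for all 1 ≤ i ≤ γ, then β is a progression parameter of D^∞. -/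
lemma rD_eq_of (d : ℕ → ℕ) (β r : ℕ)
    (hmono : ∀ i, 1 ≤ i → d i ≤ d (i + 1))
    (hle : d r ≤ β) (hlt : β < d (r + 1)) : rD d β = r := by
  have hset : {i : ℕ | 1 ≤ i ∧ d i ≤ β} = Set.Icc 1 r := by
    ext i
    simp only [Set.mem_setOf_eq, Set.mem_Icc]
    constructor
    · rintro ⟨h1, h2⟩
      refine ⟨h1, ?_⟩
      by_contra h
      push_neg at h
      have := mono2 d hmono (r + 1) i (by omega) (by omega)
      omega
    · rintro ⟨h1, h2⟩
      exact ⟨h1, le_trans (mono2 d hmono i r h1 h2) hle⟩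
  rw [rD, hset, ← Finset.coe_Icc, Set.ncard_coe_finset, Nat.card_Icc]
  omega

lemma d_rD_le (d : ℕ → ℕ) (β : ℕ)
    (hmono : ∀ i, 1 ≤ i → d i ≤ d (i + 1))
    (h1 : 1 ≤ rD d β) : d (rD d β) ≤ β := by
  by_contra h
  push_neg at h
  have hsub : {i : ℕ | 1 ≤ i ∧ d i ≤ β} ⊆ Set.Icc 1 (rD d β - 1) := by
    rintro i ⟨hi1, hi2⟩
    simp only [Set.mem_Icc]
    refine ⟨hi1, ?_⟩
    by_contra hc
    push_neg at hc
    have := mono2 d hmono (rD d β) i h1 (by omega)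
    omega
  have hcard := Set.ncard_le_ncard hsub (Set.finite_Icc _ _)
  rw [← Finset.coe_Icc, Set.ncard_coe_finset, Nat.card_Icc] at hcard
  have : rD d β = Set.ncard {i : ℕ | 1 ≤ i ∧ d i ≤ β} := rfl
  omega

/-- If `m·β = α`, `m·r = γ = r(D^∞, α)` and `d (r+i) = d i + β` for `1 ≤ i ≤ γ`,
then `β` is a progression parameter of `D^∞`. -/
theorem progParam_of_div (d : ℕ → ℕ)
    (hpos : ∀ i, 1 ≤ i → 0 < d i)
    (hmono : ∀ i, 1 ≤ i → d i ≤ d (i + 1))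
    (htend : Filter.Tendsto d Filter.atTop Filter.atTop)
    (α : ℕ) (hα : IsProgParam d α)
    (m β r : ℕ) (hm : 0 < m) (hβ : 0 < β) (hr : 0 < r)
    (hmβ : m * β = α) (hmr : m * r = rD d α)
    (hshift : ∀ i, 1 ≤ i → i ≤ rD d α → d (r + i) = d i + β) :
    IsProgParam d β := by
  have hγ1 : 1 ≤ rD d α := by
    have := Nat.mul_pos hm hr
    omega
  have hdγ : d (rD d α) ≤ α := d_rD_le d α hmono hγ1
  -- Claim A: the shift identity holds for all i ≥ 1.
  have claimA : ∀ i, 1 ≤ i → d (r + i) = d i + β := by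
    intro i
    induction i using Nat.strong_induction_on with
    | _ i ih =>
      intro hi
      by_cases hle : i ≤ rD d α
      · exact hshift i hi hle
      · push_neg at hle
        have hj : 1 ≤ i - rD d α := by omega
        have h1 : d (r + i) = d (r + (i - rD d α)) + α := by
          have e : r + i = rD d α + (r + (i - rD d α)) := by omega
          rw [e]
          exact hα.2 (r + (i - rD d α)) (by omega)
        have h2 : d i = d (i - rD d α) + α := by
          have e : i = rD d α + (i - rD d α) := by omega
          nth_rewrite 1 [e]
          exact hα.2 (i - rD d α) hj
        have h3 := ih (i - rD d α) (by omega) hj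
        omega
  -- d (k * r) = d r + (k - 1) * β for k ≥ 1
  have hchain : ∀ k, 1 ≤ k → d (k * r) = d r + (k - 1) * β := by
    intro k hk
    induction k, hk using Nat.le_induction with
    | base => simp
    | succ n hn ih =>
      have e : (n + 1) * r = r + n * r := by ring
      have hnr : 1 ≤ n * r := Nat.mul_pos hn hr
      rw [e, claimA (n * r) hnr, ih]
      have : (n + 1 - 1) * β = (n - 1) * β + β := by
        obtain ⟨n', rfl⟩ : ∃ n', n = n' + 1 := ⟨n - 1, by omega⟩
        simp [Nat.add_mul]
      omega
  have hdr : d r ≤ β := by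
    have h1 := hchain m hm
    rw [hmr] at h1
    obtain ⟨m', rfl⟩ : ∃ m', m = m' + 1 := ⟨m - 1, by omega⟩
    have h2 : (m' + 1) * β = m' * β + β := by ring
    simp only [Nat.add_sub_cancel] at h1
    omega
  have hd1 : β < d (r + 1) := by
    rw [claimA 1 le_rfl]
    have := hpos 1 le_rfl
    omega
  have hrD : rD d β = r := rD_eq_of d β r hmono hdr hd1
  exact ⟨hβ, fun i hi => by rw [hrD]; exact claimA i hi⟩
end

section
/- Let D^∞ = (d_1, d_2, ...) be nondecreasing positive integers with d_i → ∞, let α > 0 be a progression parameter with γ = r(D^∞, α), and suppose d_{r+i} = d_i + β for all 1 ≤ i ≤ γ, where r > 0 and β > 0. Then d_{r+i} = d_i + β for ALL i ≥ 1, and moreover d_{x·r+i} = d_i + x·β for all i ≥ 1 and x ≥ 1. -/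
/-- If `α` is a progression parameter with `γ = r(D^∞, α)` and `d (r+i) = d i + β`
for all `1 ≤ i ≤ γ` (with `r, β > 0`), then `d (r+i) = d i + β` for all `i ≥ 1`,
and `d (x·r + i) = d i + x·β` for all `i ≥ 1`, `x ≥ 1`. -/
theorem shift_extends (d : ℕ → ℕ)
    (hpos : ∀ i, 1 ≤ i → 0 < d i)
    (hmono : ∀ i, 1 ≤ i → d i ≤ d (i + 1))
    (htend : Filter.Tendsto d Filter.atTop Filter.atTop)
    (α : ℕ) (hα : IsProgParam d α)
    (β r : ℕ) (hβ : 0 < β) (hr : 0 < r)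
    (hshift : ∀ i, 1 ≤ i → i ≤ rD d α → d (r + i) = d i + β) :
    (∀ i, 1 ≤ i → d (r + i) = d i + β) ∧
    (∀ x i, 1 ≤ x → 1 ≤ i → d (x * r + i) = d i + x * β) := by
  obtain ⟨hα0, hαs⟩ := hα
  have hγ1 : 1 ≤ rD d α := by
    by_contra h
    have h0 : rD d α = 0 := by omega
    have := hαs 1 le_rfl
    rw [h0] at this
    simp at this
    omega
  have hstep : ∀ k j, 1 ≤ j → d (k * rD d α + j) = d j + k * α := by
    intro k
    induction k with
    | zero => simp
    | succ n ih =>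
      intro j hj
      have h1 : (n + 1) * rD d α + j = rD d α + (n * rD d α + j) := by ring
      rw [h1, hαs (n * rD d α + j) (by omega), ih j hj]
      ring
  have main : ∀ i, 1 ≤ i → d (r + i) = d i + β := by
    intro i hi
    set γ := rD d α with hγdef
    set k := (i - 1) / γ with hk
    set j := (i - 1) % γ + 1 with hjd
    have hj1 : 1 ≤ j := by omega
    have hjγ : j ≤ γ := by
      have := Nat.mod_lt (i - 1) (show 0 < γ by omega)
      omega
    have hdecomp : i = k * γ + j := by
      have h := Nat.div_add_mod (i - 1) γ
      rw [← hk] at h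
      have hc : γ * k = k * γ := Nat.mul_comm γ k
      omega
    have h1 : d i = d j + k * α := by rw [hdecomp]; exact hstep k j hj1
    have h2 : r + i = k * γ + (r + j) := by omega
    have h3 : d (r + i) = d (r + j) + k * α := by
      rw [h2]; exact hstep k (r + j) (by omega)
    rw [h3, hshift j hj1 hjγ, h1]
    ring
  refine ⟨main, ?_⟩
  intro x
  induction x with
  | zero => intro i h0 _; omega
  | succ n ih =>
    intro i _ hi
    rcases Nat.eq_zero_or_pos n with hn | hn
    · subst hn; simpa using main i hi
    · have h1 : (n + 1) * r + i = r + (n * r + i) := by ring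
      rw [h1, main (n * r + i) (by omega), ih i hn hi]
      ring
end

section
/- Let A^∞ = a_1 a_2 ... be generated from A = a_1...a_n by the symmetric shift register with parameters k, p, n, where k ≤ w(A) ≤ k+p+1, and set w_r = w(a_{r+1}...a_{r+n}) − k. Then 0 ≤ w_r ≤ p+1 for all r ≥ 0; furthermore 0 ≤ w_r < p+1 whenever a_r = 1 (r ≥ 1), and 0 < w_r ≤ p+1 whenever a_r = 0 (r ≥ 1). -/
/-- Weight bounds for the symmetric shift register: with `w_r = w(a_{r+1}...a_{r+n}) − k`,
we have `0 ≤ w_r ≤ p+1` for all `r`; `w_r < p+1` when `a_r = 1`; `0 < w_r` when `a_r = 0`. -/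
theorem shiftRegister_weight_bounds (n k p : ℕ) (hn : k + p < n)
    (a : ℕ → ℕ) (hbit : ∀ i, a i ≤ 1)
    (hgen : ∀ j : ℕ, a (n + j + 1) =
      if k ≤ (∑ i ∈ Finset.Icc (j + 2) (j + n), a i) ∧
          (∑ i ∈ Finset.Icc (j + 2) (j + n), a i) ≤ k + p
        then 1 - a (j + 1) else a (j + 1))
    (hA : k ≤ (∑ i ∈ Finset.Icc 1 n, a i) ∧ (∑ i ∈ Finset.Icc 1 n, a i) ≤ k + p + 1) :
    (∀ r : ℕ, k ≤ (∑ i ∈ Finset.Icc (r + 1) (r + n), a i) ∧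
        (∑ i ∈ Finset.Icc (r + 1) (r + n), a i) ≤ k + p + 1) ∧
    (∀ r : ℕ, 1 ≤ r → a r = 1 →
        (∑ i ∈ Finset.Icc (r + 1) (r + n), a i) < k + p + 1) ∧
    (∀ r : ℕ, 1 ≤ r → a r = 0 →
        k < ∑ i ∈ Finset.Icc (r + 1) (r + n), a i) := by
  have hn1 : 1 ≤ n := by omega
  set S : ℕ → ℕ := fun r => ∑ i ∈ Finset.Icc (r + 1) (r + n), a i with hS
  set T : ℕ → ℕ := fun j => ∑ i ∈ Finset.Icc (j + 2) (j + n), a i with hT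
  -- S j = a (j+1) + T j
  have hsplit : ∀ j, S j = a (j + 1) + T j := by
    intro j
    have h1 : Finset.Icc (j + 2) (j + n) = Finset.Ioc (j + 1) (j + n) := by
      rw [show j + 2 = (j + 1) + 1 by omega, Finset.Icc_add_one_left_eq_Ioc]
    have h2 : j + 1 ≤ j + n := by omega
    simp only [hS, hT, h1]
    rw [← Finset.add_sum_Ioc_eq_sum_Icc h2]
  -- S (j+1) = T j + a (n+j+1)
  have hstep : ∀ j, S (j + 1) = T j + a (n + j + 1) := by
    intro j
    have h2 : j + 2 ≤ j + n + 1 := by omega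
    simp only [hS, hT]
    rw [show j + 1 + 1 = j + 2 by omega, show j + 1 + n = (j + n) + 1 by omega,
      Finset.sum_Icc_succ_top h2, show j + n + 1 = n + j + 1 by omega]
  -- invariant
  have hinv : ∀ r, k ≤ S r ∧ S r ≤ k + p + 1 := by
    intro r
    induction r with
    | zero => simpa [hS] using hA
    | succ j ih =>
      have hgj := hgen j
      have hb := hbit (j + 1)
      rw [hstep j, hgj]
      by_cases hc : k ≤ T j ∧ T j ≤ k + p
      · rw [if_pos hc]; omega
      · rw [if_neg hc]
        have := hsplit j
        omega
  refine ⟨fun r => hinv r, ?_, ?_⟩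
  · rintro r hr h1
    obtain ⟨j, rfl⟩ : ∃ j, r = j + 1 := ⟨r - 1, by omega⟩
    have hgj := hgen j
    have hs := hsplit j
    have hSj := hinv j
    rw [show (∑ i ∈ Finset.Icc (j + 1 + 1) (j + 1 + n), a i) = S (j + 1) from rfl,
      hstep j, hgj]
    by_cases hc : k ≤ T j ∧ T j ≤ k + p
    · rw [if_pos hc]; omega
    · rw [if_neg hc]; omega
  · rintro r hr h0
    obtain ⟨j, rfl⟩ : ∃ j, r = j + 1 := ⟨r - 1, by omega⟩
    have hgj := hgen j
    have hs := hsplit j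
    have hSj := hinv j
    rw [show (∑ i ∈ Finset.Icc (j + 1 + 1) (j + 1 + n), a i) = S (j + 1) from rfl,
      hstep j, hgj]
    by_cases hc : k ≤ T j ∧ T j ≤ k + p
    · rw [if_pos hc]; omega
    · rw [if_neg hc]; omega
end

section
/- Let A^∞ be generated by the symmetric shift register with parameters k, p, n from A with k ≤ w(A) ≤ k+p+1, and let w_r = w(a_{r+1}...a_{r+n}) − k. Suppose a_{r+i} = 1 for 1 ≤ i ≤ q where r ≥ 0, q ≥ 1, and let s = min{q, w_r}. Then w_{r+q} = w_r − s and the bits a_{r+n+1}...a_{r+n+q} equal 0_s 1_{q−s} (s zeros followed by q−s ones). -/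
lemma ssr_step (n k p : ℕ) (hn : k + p < n) (a : ℕ → ℕ) (hbit : ∀ i, a i ≤ 1)
    (hgen : ∀ j : ℕ, a (n + j + 1) =
      if k ≤ (∑ i ∈ Finset.Icc (j + 2) (j + n), a i) ∧
          (∑ i ∈ Finset.Icc (j + 2) (j + n), a i) ≤ k + p
        then 1 - a (j + 1) else a (j + 1))
    (W : ℕ → ℤ) (hW : ∀ m, W m = (∑ i ∈ Finset.Icc (m + 1) (m + n), (a i : ℤ)) - k)
    (m : ℕ) (h0 : 0 ≤ W m) (h1 : W m ≤ (p : ℤ) + 1) :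
    (0 ≤ W (m + 1) ∧ W (m + 1) ≤ (p : ℤ) + 1) ∧
    (a (m + 1) = 1 →
      (1 ≤ W m → a (m + n + 1) = 0 ∧ W (m + 1) = W m - 1) ∧
      (W m < 1 → a (m + n + 1) = 1 ∧ W (m + 1) = W m)) := by
  have hn1 : 1 ≤ n := by omega
  set S := ∑ i ∈ Finset.Icc (m + 2) (m + n), a i with hS
  have hsplit : Finset.Icc (m + 1) (m + n) = insert (m + 1) (Finset.Icc (m + 2) (m + n)) := by
    ext x; simp only [Finset.mem_Icc, Finset.mem_insert]; omega
  have hcast : ∀ (t : Finset ℕ), (∑ i ∈ t, (a i : ℤ)) = ((∑ i ∈ t, a i : ℕ) : ℤ) := by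
    intro t; push_cast; ring
  have hWm : W m = (a (m + 1) : ℤ) + (S : ℤ) - k := by
    rw [hW m, hsplit, Finset.sum_insert (by simp)]
    rw [hcast]
  have hWm1 : W (m + 1) = (S : ℤ) + (a (m + n + 1) : ℤ) - k := by
    rw [hW (m + 1), show m + 1 + n = m + n + 1 by ring,
      Finset.sum_Icc_succ_top (by omega : m + 1 + 1 ≤ m + n + 1)]
    rw [show m + 1 + 1 = m + 2 by ring, hcast]
  have hg := hgen m
  rw [show n + m + 1 = m + n + 1 by ring] at hg
  have hb := hbit (m + 1)
  have hb2 := hbit (m + n + 1)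
  by_cases hc : k ≤ S ∧ S ≤ k + p
  · rw [if_pos hc] at hg
    omega
  · rw [if_neg hc] at hg
    omega

lemma ssr_inv (n k p : ℕ) (hn : k + p < n) (a : ℕ → ℕ) (hbit : ∀ i, a i ≤ 1)
    (hgen : ∀ j : ℕ, a (n + j + 1) =
      if k ≤ (∑ i ∈ Finset.Icc (j + 2) (j + n), a i) ∧
          (∑ i ∈ Finset.Icc (j + 2) (j + n), a i) ≤ k + p
        then 1 - a (j + 1) else a (j + 1))
    (hA : k ≤ (∑ i ∈ Finset.Icc 1 n, a i) ∧ (∑ i ∈ Finset.Icc 1 n, a i) ≤ k + p + 1)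
    (W : ℕ → ℤ) (hW : ∀ m, W m = (∑ i ∈ Finset.Icc (m + 1) (m + n), (a i : ℤ)) - k) :
    ∀ m, 0 ≤ W m ∧ W m ≤ (p : ℤ) + 1 := by
  intro m
  induction m with
  | zero =>
    have h0 : W 0 = ((∑ i ∈ Finset.Icc 1 n, a i : ℕ) : ℤ) - k := by
      rw [hW 0]; simp only [Nat.zero_add]; push_cast; ring
    omega
  | succ m ih =>
    exact (ssr_step n k p hn a hbit hgen W hW m ih.1 ih.2).1

/-- Run of ones: if `a_{r+1} = ⋯ = a_{r+q} = 1` and `s = min{q, w_r}`, then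
`w_{r+q} = w_r − s` and `a_{r+n+1} ⋯ a_{r+n+q} = 0_s 1_{q−s}`. -/
theorem shiftRegister_run_of_ones (n k p : ℕ) (hn : k + p < n)
    (a : ℕ → ℕ) (hbit : ∀ i, a i ≤ 1)
    (hgen : ∀ j : ℕ, a (n + j + 1) =
      if k ≤ (∑ i ∈ Finset.Icc (j + 2) (j + n), a i) ∧
          (∑ i ∈ Finset.Icc (j + 2) (j + n), a i) ≤ k + p
        then 1 - a (j + 1) else a (j + 1))
    (hA : k ≤ (∑ i ∈ Finset.Icc 1 n, a i) ∧ (∑ i ∈ Finset.Icc 1 n, a i) ≤ k + p + 1)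
    (W : ℕ → ℤ) (hW : ∀ m, W m = (∑ i ∈ Finset.Icc (m + 1) (m + n), (a i : ℤ)) - k)
    (r q : ℕ) (hq : 1 ≤ q)
    (hones : ∀ i, 1 ≤ i → i ≤ q → a (r + i) = 1)
    (s : ℤ) (hs : s = min (q : ℤ) (W r)) :
    W (r + q) = W r - s ∧
    (∀ i : ℕ, 1 ≤ i → (i : ℤ) ≤ s → a (r + n + i) = 0) ∧
    (∀ i : ℕ, s < (i : ℤ) → i ≤ q → a (r + n + i) = 1) := by
  have hinv := ssr_inv n k p hn a hbit hgen hA W hW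
  have hrun : ∀ i, i ≤ q → W (r + i) = max (W r - (i : ℤ)) 0 := by
    intro i
    induction i with
    | zero =>
      intro _
      have := (hinv r).1
      simp only [Nat.add_zero, Nat.cast_zero]
      omega
    | succ i ih =>
      intro hiq
      have hih := ih (by omega)
      have hone : a (r + i + 1) = 1 := by
        have := hones (i + 1) (by omega) (by omega)
        rwa [show r + (i + 1) = r + i + 1 by ring] at this
      have hstep := (ssr_step n k p hn a hbit hgen W hW (r + i)
        (hinv (r + i)).1 (hinv (r + i)).2).2 hone
      have hWri := (hinv (r + i)).1
      rw [show r + (i + 1) = r + i + 1 by ring]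
      push_cast
      by_cases hpos : 1 ≤ W (r + i)
      · have := (hstep.1 hpos).2
        omega
      · have := (hstep.2 (by omega)).2
        omega
  have hbits : ∀ i : ℕ, 1 ≤ i → i ≤ q →
      (((i : ℤ) ≤ W r → a (r + n + i) = 0) ∧ (W r < (i : ℤ) → a (r + n + i) = 1)) := by
    intro i h1 h2
    have hone : a (r + (i - 1) + 1) = 1 := by
      rw [show r + (i - 1) + 1 = r + i by omega]
      exact hones i h1 h2
    have hstep := (ssr_step n k p hn a hbit hgen W hW (r + (i - 1))
      (hinv (r + (i - 1))).1 (hinv (r + (i - 1))).2).2 hone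
    have hWm := hrun (i - 1) (by omega)
    rw [show r + (i - 1) + n + 1 = r + n + i by omega] at hstep
    have hcast : ((i - 1 : ℕ) : ℤ) = (i : ℤ) - 1 := by omega
    rw [hcast] at hWm
    constructor
    · intro hle
      exact (hstep.1 (by omega)).1
    · intro hlt
      exact (hstep.2 (by omega)).1
  have hWr0 := (hinv r).1
  refine ⟨?_, ?_, ?_⟩
  · have := hrun q le_rfl
    omega
  · intro i h1 h2
    have hiq : i ≤ q := by omega
    exact (hbits i h1 hiq).1 (by omega)
  · intro i h1 h2
    have h1' : 1 ≤ i := by omega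
    exact (hbits i h1' h2).2 (by omega)
end

section
/- Let A^∞ be generated by the symmetric shift register with parameters k, p, n from A with k ≤ w(A) ≤ k+p+1, and let w_r = w(a_{r+1}...a_{r+n}) − k. Suppose a_{r+i} = 0 for 1 ≤ i ≤ q where r ≥ 0, q ≥ 1, and let s = min{q, p+1−w_r}. Then w_{r+q} = w_r + s and the bits a_{r+n+1}...a_{r+n+q} equal 1_s 0_{q−s}. -/
/-- Run of zeros: if `a_{r+1} = ⋯ = a_{r+q} = 0` and `s = min{q, p+1−w_r}`, then
`w_{r+q} = w_r + s` and `a_{r+n+1} ⋯ a_{r+n+q} = 1_s 0_{q−s}`. -/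
theorem shiftRegister_run_of_zeros (n k p : ℕ) (hn : k + p < n)
    (a : ℕ → ℕ) (hbit : ∀ i, a i ≤ 1)
    (hgen : ∀ j : ℕ, a (n + j + 1) =
      if k ≤ (∑ i ∈ Finset.Icc (j + 2) (j + n), a i) ∧
          (∑ i ∈ Finset.Icc (j + 2) (j + n), a i) ≤ k + p
        then 1 - a (j + 1) else a (j + 1))
    (hA : k ≤ (∑ i ∈ Finset.Icc 1 n, a i) ∧ (∑ i ∈ Finset.Icc 1 n, a i) ≤ k + p + 1)
    (W : ℕ → ℤ) (hW : ∀ m, W m = (∑ i ∈ Finset.Icc (m + 1) (m + n), (a i : ℤ)) - k)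
    (r q : ℕ) (hq : 1 ≤ q)
    (hzeros : ∀ i, 1 ≤ i → i ≤ q → a (r + i) = 0)
    (s : ℤ) (hs : s = min (q : ℤ) ((p : ℤ) + 1 - W r)) :
    W (r + q) = W r + s ∧
    (∀ i : ℕ, 1 ≤ i → (i : ℤ) ≤ s → a (r + n + i) = 1) ∧
    (∀ i : ℕ, s < (i : ℤ) → i ≤ q → a (r + n + i) = 0) := by
  have hn1 : 1 ≤ n := by omega
  have hsplit1 : ∀ m : ℕ, (∑ i ∈ Finset.Icc (m + 1) (m + n), a i)
      = a (m + 1) + ∑ i ∈ Finset.Icc (m + 2) (m + n), a i := by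
    intro m
    have hins : Finset.Icc (m + 1) (m + n) = insert (m + 1) (Finset.Icc (m + 2) (m + n)) := by
      ext x
      simp only [Finset.mem_Icc, Finset.mem_insert]
      omega
    rw [hins, Finset.sum_insert (by simp [Finset.mem_Icc])]
  have hsplit2 : ∀ m : ℕ, (∑ i ∈ Finset.Icc (m + 1 + 1) (m + 1 + n), a i)
      = (∑ i ∈ Finset.Icc (m + 2) (m + n), a i) + a (m + n + 1) := by
    intro m
    have hins : Finset.Icc (m + 1 + 1) (m + 1 + n)
        = insert (m + n + 1) (Finset.Icc (m + 2) (m + n)) := by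
      ext x
      simp only [Finset.mem_Icc, Finset.mem_insert]
      omega
    rw [hins, Finset.sum_insert (by simp [Finset.mem_Icc]), add_comm]
  have hWS : ∀ m : ℕ, W m
      = (a (m + 1) : ℤ) + ((∑ i ∈ Finset.Icc (m + 2) (m + n), a i : ℕ) : ℤ) - k := by
    intro m
    rw [hW m, ← Nat.cast_sum, hsplit1 m]
    push_cast
    ring
  have hWS2 : ∀ m : ℕ, W (m + 1)
      = ((∑ i ∈ Finset.Icc (m + 2) (m + n), a i : ℕ) : ℤ) + (a (m + n + 1) : ℤ) - k := by
    intro m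
    rw [hW (m + 1), ← Nat.cast_sum, hsplit2 m]
    push_cast
    ring
  have hgen' : ∀ m : ℕ, a (m + n + 1) =
      if k ≤ (∑ i ∈ Finset.Icc (m + 2) (m + n), a i) ∧
          (∑ i ∈ Finset.Icc (m + 2) (m + n), a i) ≤ k + p
        then 1 - a (m + 1) else a (m + 1) := by
    intro m
    have h := hgen m
    rwa [show n + m + 1 = m + n + 1 from by omega] at h
  have hinv : ∀ m : ℕ, 0 ≤ W m ∧ W m ≤ (p : ℤ) + 1 := by
    intro m
    induction m with
    | zero =>
        have h0 := hW 0
        simp only [Nat.zero_add] at h0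
        have hc : ((∑ i ∈ Finset.Icc 1 n, a i : ℕ) : ℤ) = ∑ i ∈ Finset.Icc 1 n, (a i : ℤ) :=
          Nat.cast_sum _ _
        omega
    | succ m ih =>
        have h1 := hWS m
        have h2 := hWS2 m
        have hg := hgen' m
        have hb := hbit (m + 1)
        by_cases hc : k ≤ (∑ i ∈ Finset.Icc (m + 2) (m + n), a i)
            ∧ (∑ i ∈ Finset.Icc (m + 2) (m + n), a i) ≤ k + p
        · rw [if_pos hc] at hg
          omega
        · rw [if_neg hc] at hg
          rw [not_and_or, not_le, not_le] at hc
          omega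
  have hrun : ∀ i : ℕ, i ≤ q → W (r + i) = min (W r + (i : ℤ)) ((p : ℤ) + 1) := by
    intro i
    induction i with
    | zero =>
        intro _
        simpa using (min_eq_left (hinv r).2).symm
    | succ i ih =>
        intro hi
        have ih' := ih (by omega)
        have hz : a (r + i + 1) = 0 := by
          have h := hzeros (i + 1) (by omega) hi
          rwa [show r + (i + 1) = r + i + 1 from by omega] at h
        have h1 := hWS (r + i)
        have h2 := hWS2 (r + i)
        have hg := hgen' (r + i)
        have hw0 := (hinv r).1
        have hwr1 := (hinv r).2
        rw [show r + (i + 1) = r + i + 1 from by omega]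
        push_cast
        rw [min_def] at ih' ⊢
        by_cases hc : k ≤ (∑ j ∈ Finset.Icc (r + i + 2) (r + i + n), a j)
            ∧ (∑ j ∈ Finset.Icc (r + i + 2) (r + i + n), a j) ≤ k + p
        · rw [if_pos hc] at hg
          split_ifs at ih' ⊢ <;> omega
        · rw [if_neg hc] at hg
          rw [not_and_or, not_le, not_le] at hc
          split_ifs at ih' ⊢ <;> omega
  have hbitval : ∀ i : ℕ, 1 ≤ i → i ≤ q →
      (((i : ℤ) ≤ (p : ℤ) + 1 - W r → a (r + n + i) = 1) ∧
       ((p : ℤ) + 1 - W r < (i : ℤ) → a (r + n + i) = 0)) := by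
    intro i h1i hiq
    obtain ⟨j, rfl⟩ : ∃ j, i = j + 1 := ⟨i - 1, by omega⟩
    have hWj := hrun j (by omega)
    have hz : a (r + j + 1) = 0 := by
      have h := hzeros (j + 1) (by omega) hiq
      rwa [show r + (j + 1) = r + j + 1 from by omega] at h
    have h1 := hWS (r + j)
    have h2 := hWS2 (r + j)
    have hg := hgen' (r + j)
    have hw0 := (hinv r).1
    have hwr1 := (hinv r).2
    rw [show r + n + (j + 1) = r + j + n + 1 from by omega]
    rw [min_def] at hWj
    push_cast
    by_cases hc : k ≤ (∑ x ∈ Finset.Icc (r + j + 2) (r + j + n), a x)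
        ∧ (∑ x ∈ Finset.Icc (r + j + 2) (r + j + n), a x) ≤ k + p
    · rw [if_pos hc] at hg
      constructor <;> intro h <;> split_ifs at hWj <;> omega
    · rw [if_neg hc] at hg
      rw [not_and_or, not_le, not_le] at hc
      constructor <;> intro h <;> split_ifs at hWj <;> omega
  have hs1 : s ≤ (q : ℤ) := by rw [hs]; exact min_le_left _ _
  have hs2 : s ≤ (p : ℤ) + 1 - W r := by rw [hs]; exact min_le_right _ _
  have hs0 : 0 ≤ s := by
    rw [hs]
    exact le_min (by positivity) (by have := (hinv r).2; omega)
  refine ⟨?_, ?_, ?_⟩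
  · have hq' := hrun q le_rfl
    rw [min_def] at hq'
    rw [min_def] at hs
    split_ifs at hq' hs <;> omega
  · intro i h1 h2
    have hiq : i ≤ q := by omega
    exact (hbitval i h1 hiq).1 (by omega)
  · intro i hsi hiq
    have h1i : 1 ≤ i := by omega
    have hlt : (p : ℤ) + 1 - W r < (i : ℤ) := by
      by_contra hcon
      push_neg at hcon
      have : (i : ℤ) ≤ s := by
        rw [hs]
        exact le_min (by exact_mod_cast hiq) hcon
      omega
    exact (hbitval i h1i hiq).2 hlt
end

section
/- Let A^∞ be generated from A = a_1...a_n (with a_1 = 1 and w(A) = k+p+1) by the symmetric shift register with parameters k, p, n. If r > 0 is a period of A^∞ (i.e., a_{r+i} = a_i for all i ≥ 1), then a_r = 0, a_{r+1} = 1, and w(a_{r+1}...a_{r+n}) = k+p+1. -/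
/-!
Write `s` for the weight of `a (j+2) … a (j+n)`, so that the window `a (j+2) … a (j+n+1)` has
weight `s + a (n+j+1)`. If that weight is `k+p+1`, then either `s = k+p`, the register flips and
`a (n+j+1) = 1` forces `a (j+1) = 0`; or `s = k+p+1`, the register copies and
`a (j+1) = a (n+j+1) = 0`. So a window of weight `k+p+1` is always preceded by a `0`. By
periodicity the window starting at `a (r+1) = a 1 = 1` has the weight `k+p+1` of `A`, hence `a r = 0`.
-/

open Finset

section Window

variable {M : Type*} [AddCommMonoid M] (a : ℕ → M) (n : ℕ)

def windowSum (j : ℕ) : M := ∑ i ∈ Icc (j + 1) (j + n), a i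

variable {n}

theorem windowSum_succ (hn : 0 < n) (j : ℕ) :
    windowSum a n (j + 1) = (∑ i ∈ Icc (j + 2) (j + n), a i) + a (n + j + 1) := by
  rw [windowSum, show j + 1 + n = j + n + 1 by omega, sum_Icc_succ_top (by omega),
    show j + n + 1 = n + j + 1 by omega]

theorem windowSum_eq_of_period {r : ℕ} (hper : ∀ i, 1 ≤ i → a (r + i) = a i) :
    windowSum a n r = windowSum a n 0 := by
  rw [windowSum, windowSum, ← map_add_left_Icc, sum_map, zero_add, zero_add]
  exact sum_congr rfl fun i hi => hper i (mem_Icc.mp hi).1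

end Window

def IsSymmetricShiftRegister (n k p : ℕ) (a : ℕ → ℕ) : Prop :=
  ∀ j : ℕ, a (n + j + 1) =
    if k ≤ (∑ i ∈ Icc (j + 2) (j + n), a i) ∧ (∑ i ∈ Icc (j + 2) (j + n), a i) ≤ k + p
      then 1 - a (j + 1) else a (j + 1)

namespace IsSymmetricShiftRegister

variable {n k p : ℕ} {a : ℕ → ℕ}

theorem eq_zero_of_windowSum_succ_eq (h : IsSymmetricShiftRegister n k p a)
    (hbit : ∀ i, a i ≤ 1) (hn : 0 < n) {m : ℕ}
    (hm : windowSum a n (m + 1) = k + p + 1) : a (m + 1) = 0 := by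
  have hsplit := windowSum_succ a hn m
  have hnew := hbit (n + m + 1)
  have hstep := h m
  split_ifs at hstep <;> omega

end IsSymmetricShiftRegister

theorem shiftRegister_period_props_general (n k p : ℕ)
    (a : ℕ → ℕ) (hbit : ∀ i, a i ≤ 1)
    (hgen : ∀ j : ℕ, a (n + j + 1) =
      if k ≤ (∑ i ∈ Finset.Icc (j + 2) (j + n), a i) ∧
          (∑ i ∈ Finset.Icc (j + 2) (j + n), a i) ≤ k + p
        then 1 - a (j + 1) else a (j + 1))
    (ha1 : a 1 = 1)
    (hwA : (∑ i ∈ Finset.Icc 1 n, a i) = k + p + 1)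
    (r : ℕ) (hr : 0 < r)
    (hper : ∀ i, 1 ≤ i → a (r + i) = a i) :
    a r = 0 ∧ a (r + 1) = 1 ∧ (∑ i ∈ Finset.Icc (r + 1) (r + n), a i) = k + p + 1 := by
  have hreg : IsSymmetricShiftRegister n k p a := hgen
  have hn : 0 < n := Nat.pos_of_ne_zero (by rintro rfl; simp at hwA)
  have hW0 : windowSum a n 0 = k + p + 1 := by simpa [windowSum] using hwA
  have hWr : windowSum a n r = k + p + 1 := (windowSum_eq_of_period a hper).trans hW0
  obtain ⟨m, rfl⟩ : ∃ m, r = m + 1 := ⟨r - 1, by omega⟩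
  refine ⟨?_, by rw [hper 1 le_rfl, ha1], hWr⟩
  exact hreg.eq_zero_of_windowSum_succ_eq hbit hn hWr

/-- If `r > 0` is a period of `A^∞` (generated from `A` with `a_1 = 1`,
`w(A) = k+p+1`), then `a_r = 0`, `a_{r+1} = 1` and `w(a_{r+1}...a_{r+n}) = k+p+1`. -/
theorem shiftRegister_period_props (n k p : ℕ) (hn : k + p < n)
    (a : ℕ → ℕ) (hbit : ∀ i, a i ≤ 1)
    (hgen : ∀ j : ℕ, a (n + j + 1) =
      if k ≤ (∑ i ∈ Finset.Icc (j + 2) (j + n), a i) ∧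
          (∑ i ∈ Finset.Icc (j + 2) (j + n), a i) ≤ k + p
        then 1 - a (j + 1) else a (j + 1))
    (ha1 : a 1 = 1)
    (hwA : (∑ i ∈ Finset.Icc 1 n, a i) = k + p + 1)
    (r : ℕ) (hr : 0 < r)
    (hper : ∀ i, 1 ≤ i → a (r + i) = a i) :
    a r = 0 ∧ a (r + 1) = 1 ∧ (∑ i ∈ Finset.Icc (r + 1) (r + n), a i) = k + p + 1 :=
  shiftRegister_period_props_general n k p a hbit hgen ha1 hwA r hr hper
end

section
/- Let A^∞ be generated from A = a_1...a_n (with a_1 = 1 and w(A) = k+p+1) by the symmetric shift register, and let V(A^∞) = (q_1, q_2, ...) be its run-length (vector) representation, so A^∞ = 1_{q_1} 0_{q_2} 1_{q_3} 0_{q_4} ... with all q_i ≥ 1. If j is the least even vector period of V(A^∞), then q_1 + ... + q_j is the minimal period of A^∞. -/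
/-- If `j` is the least even vector period of the run-length representation
`V(A^∞) = (q_1, q_2, ...)`, then `q_1 + ⋯ + q_j` is the minimal period of `A^∞`. -/
theorem minimal_period_of_least_even_vector_period (n k p : ℕ) (hn : k + p < n)
    (a : ℕ → ℕ) (hbit : ∀ i, a i ≤ 1)
    (hgen : ∀ j : ℕ, a (n + j + 1) =
      if k ≤ (∑ i ∈ Finset.Icc (j + 2) (j + n), a i) ∧
          (∑ i ∈ Finset.Icc (j + 2) (j + n), a i) ≤ k + p
        then 1 - a (j + 1) else a (j + 1))
    (ha1 : a 1 = 1)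
    (hwA : (∑ i ∈ Finset.Icc 1 n, a i) = k + p + 1)
    -- run-length representation: A^∞ = 1_{q_1} 0_{q_2} 1_{q_3} ⋯ with q_i ≥ 1
    (q : ℕ → ℕ) (hq : ∀ i, 1 ≤ i → 1 ≤ q i)
    (R : ℕ → ℕ) (hR0 : R 0 = 0) (hRs : ∀ j, R (j + 1) = R j + q (j + 1))
    (hruns : ∀ j m, R j < m → m ≤ R (j + 1) → a m = if j % 2 = 0 then 1 else 0)
    -- j is the least even vector period of (q_1, q_2, ...)
    (j : ℕ) (hj0 : 0 < j) (hjeven : j % 2 = 0)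
    (hjper : ∀ i, 1 ≤ i → q (j + i) = q i)
    (hjleast : ∀ j', 0 < j' → j' % 2 = 0 → (∀ i, 1 ≤ i → q (j' + i) = q i) → j ≤ j') :
    (∀ i, 1 ≤ i → a (R j + i) = a i) ∧
    (∀ r, 0 < r → (∀ i, 1 ≤ i → a (r + i) = a i) → R j ≤ r) := by
  -- basic facts about R
  have hRlt : ∀ t, R t < R (t + 1) := by
    intro t
    have h1 := hq (t + 1) (by omega)
    have h2 := hRs t
    omega
  have hRmono : ∀ s t, s ≤ t → R s ≤ R t := by
    intro s t hst
    induction t with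
    | zero =>
      have hs0 : s = 0 := by omega
      rw [hs0]
    | succ t ih =>
      rcases Nat.lt_or_ge s (t + 1) with h | h
      · exact le_trans (ih (by omega)) (le_of_lt (hRlt t))
      · have hst : s = t + 1 := by omega
        rw [hst]
  have hRstrict : ∀ s t, s < t → R s < R t := by
    intro s t h
    exact lt_of_lt_of_le (hRlt s) (hRmono (s + 1) t h)
  -- existence of the run containing a position
  have hrun_ex : ∀ m, 1 ≤ m → ∃ t, R t < m ∧ m ≤ R (t + 1) := by
    intro m hm
    induction m with
    | zero => omega
    | succ m ih =>
      rcases Nat.eq_or_lt_of_le hm with h | h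
      · refine ⟨0, by omega, ?_⟩
        show m + 1 ≤ R 1
        have h1 : R 1 = R 0 + q 1 := hRs 0
        have h2 := hq 1 (by omega)
        omega
      · obtain ⟨t, ht1, ht2⟩ := ih (by omega)
        rcases Nat.lt_or_ge m (R (t + 1)) with h2 | h2
        · exact ⟨t, by omega, by omega⟩
        · refine ⟨t + 1, by omega, ?_⟩
          show m + 1 ≤ R (t + 2)
          have h3 : R (t + 2) = R (t + 1) + q (t + 2) := hRs (t + 1)
          have h4 := hq (t + 2) (by omega)
          omega
  -- a position whose value differs from its successor ends its run
  have hrunend : ∀ s x, R s < x → x ≤ R (s + 1) → a x ≠ a (x + 1) → x = R (s + 1) := by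
    intro s x h1 h2 hne
    by_contra h
    have e1 := hruns s x h1 h2
    have e2 := hruns s (x + 1) (by omega) (by omega)
    exact hne (by rw [e1, e2])
  constructor
  · -- R j is a period
    have hRadd : ∀ t, R (j + t) = R j + R t := by
      intro t
      induction t with
      | zero => simp [hR0]
      | succ t ih =>
        have h1 : R (j + (t + 1)) = R (j + t) + q (j + (t + 1)) := hRs (j + t)
        rw [h1, ih, hjper (t + 1) (by omega), hRs t]
        ring
    intro i hi
    obtain ⟨t, h1, h2⟩ := hrun_ex i hi
    have e1 := hruns t i h1 h2
    have e2 : a (R j + i) = if (j + t) % 2 = 0 then 1 else 0 := by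
      apply hruns (j + t) (R j + i)
      · rw [hRadd t]; omega
      · have : j + t + 1 = j + (t + 1) := by ring
        rw [this, hRadd (t + 1)]; omega
    rw [e1, e2]
    have : (j + t) % 2 = t % 2 := by omega
    rw [this]
  · -- minimality
    intro r hr hper
    obtain ⟨m, hm1, hm2⟩ := hrun_ex r (by omega)
    -- general inductive step: if R(M+t) = r + R t and M even, then R(M+t+1) = r + R(t+1)
    have hstep : ∀ M t, M % 2 = 0 → R (M + t) = r + R t → R (M + t + 1) = r + R (t + 1) := by
      intro M t hM ht
      have haux : ∀ y, r + R t < y → y ≤ r + R (t + 1) → a y = if t % 2 = 0 then 1 else 0 := by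
        intro y hy1 hy2
        have hy0 : r < y := by omega
        obtain ⟨i, rfl⟩ : ∃ i, y = r + i := ⟨y - r, by omega⟩
        have hi1 : R t < i := by omega
        rw [hper i (by omega)]
        exact hruns t i hi1 (by omega)
      have hax : a (r + R (t + 1)) = if t % 2 = 0 then 1 else 0 := by
        have := hRlt t
        exact haux _ (by omega) le_rfl
      have hax1 : a (r + R (t + 1) + 1) = if (t + 1) % 2 = 0 then 1 else 0 := by
        have h1 : a (R (t + 1) + 1) = if (t + 1) % 2 = 0 then 1 else 0 := by
          have := hRlt (t + 1)
          exact hruns (t + 1) (R (t + 1) + 1) (by omega) (by omega)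
        have h2 := hper (R (t + 1) + 1) (by omega)
        have h3 : r + R (t + 1) + 1 = r + (R (t + 1) + 1) := by ring
        rw [h3, h2, h1]
      have hne : a (r + R (t + 1)) ≠ a (r + R (t + 1) + 1) := by
        rw [hax, hax1]
        split_ifs with h1 h2 <;> omega
      obtain ⟨s, hs1, hs2⟩ := hrun_ex (r + R (t + 1)) (by omega)
      have hxend := hrunend s _ hs1 hs2 hne
      have hMt_le : M + t ≤ s := by
        by_contra hc
        have h4 : R (s + 1) ≤ R (M + t) := hRmono _ _ (by omega)
        have := hRlt t
        omega
      rcases Nat.eq_or_lt_of_le hMt_le with h | h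
      · rw [← h] at hxend
        omega
      · exfalso
        have hy2 : R (M + t + 1) + 1 ≤ r + R (t + 1) := by
          have h5 : R (M + t + 1) ≤ R s := hRmono _ _ (by omega)
          omega
        have hy1 : r + R t < R (M + t + 1) + 1 := by
          have := hRstrict (M + t) (M + t + 1) (by omega)
          omega
        have e1 := haux (R (M + t + 1) + 1) hy1 hy2
        have e2 : a (R (M + t + 1) + 1) = if (M + t + 1) % 2 = 0 then 1 else 0 := by
          have := hRlt (M + t + 1)
          exact hruns (M + t + 1) (R (M + t + 1) + 1) (by omega) (by omega)
        rw [e1] at e2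
        split_ifs at e2 with h1 h2 <;> omega
    -- value at r+1 is 1, so the run containing r+1 has even index
    have hval_r1 : a (r + 1) = 1 := by rw [hper 1 (by omega), ha1]
    rcases Nat.eq_or_lt_of_le hm2 with hcase | hcase
    · -- boundary case: r = R (m+1)
      set M := m + 1 with hMdef
      have hME : M % 2 = 0 := by
        have e := hruns M (r + 1) (by omega) (by have := hRlt M; omega)
        rw [hval_r1] at e
        split_ifs at e with h <;> omega
      have hind : ∀ t, R (M + t) = r + R t := by
        intro t
        induction t with
        | zero => simp [hR0, hcase]
        | succ t ih =>
          have := hstep M t hME ih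
          have harith : M + (t + 1) = M + t + 1 := by ring
          rw [harith, this]
      have hqper : ∀ i, 1 ≤ i → q (M + i) = q i := by
        intro i hi
        obtain ⟨i', rfl⟩ : ∃ i', i = i' + 1 := ⟨i - 1, by omega⟩
        have h1 : R (M + (i' + 1)) = R (M + i') + q (M + (i' + 1)) := hRs (M + i')
        have h2 := hind (i' + 1)
        have h3 := hind i'
        have h4 := hRs i'
        omega
      have := hjleast M (by omega) hME hqper
      have := hRmono j M this
      omega
    · -- interior case: R m < r < R (m+1); leads to contradiction with least even period
      exfalso
      have hmE : m % 2 = 0 := by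
        have e := hruns m (r + 1) (by omega) (by omega)
        rw [hval_r1] at e
        split_ifs at e with h <;> omega
      -- base: R (m+1) = r + R 1
      have hR01 : R 1 = R 0 + q 1 := hRs 0
      have hR1 : R 1 = q 1 := by omega
      have hruns0 : ∀ x, R 0 < x → x ≤ R 1 → a x = 1 := by
        intro x hx1 hx2
        have e : a x = if 0 % 2 = 0 then 1 else 0 := hruns 0 x hx1 hx2
        simpa using e
      have hruns1 : ∀ x, R 1 < x → x ≤ R 2 → a x = 0 := by
        intro x hx1 hx2
        have e : a x = if 1 % 2 = 0 then 1 else 0 := hruns 1 x hx1 hx2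
        simpa using e
      have hbase : R (m + 1) = r + R 1 := by
        have haux0 : ∀ y, r < y → y ≤ r + R 1 → a y = 1 := by
          intro y hy1 hy2
          obtain ⟨i, rfl⟩ : ∃ i, y = r + i := ⟨y - r, by omega⟩
          rw [hper i (by omega)]
          exact hruns0 i (by omega) (by omega)
        have hax : a (r + R 1) = 1 := haux0 _ (by have := hq 1 (by omega); omega) le_rfl
        have hax1 : a (r + R 1 + 1) = 0 := by
          have h1 : a (R 1 + 1) = 0 := by
            have h5 : R 2 = R 1 + q 2 := hRs 1
            have h6 := hq 2 (by omega)
            exact hruns1 (R 1 + 1) (by omega) (by omega)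
          have h2 := hper (R 1 + 1) (by have := hq 1 (by omega); omega)
          have h3 : r + R 1 + 1 = r + (R 1 + 1) := by ring
          rw [h3, h2, h1]
        have hne : a (r + R 1) ≠ a (r + R 1 + 1) := by rw [hax, hax1]; omega
        obtain ⟨s, hs1, hs2⟩ := hrun_ex (r + R 1) (by omega)
        have hxend := hrunend s _ hs1 hs2 hne
        have hm_le : m ≤ s := by
          by_contra hc
          have h4 : R (s + 1) ≤ R m := hRmono _ _ (by omega)
          omega
        rcases Nat.eq_or_lt_of_le hm_le with h | h
        · rw [← h] at hxend; omega
        · exfalso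
          have hy2 : R (m + 1) + 1 ≤ r + R 1 := by
            have h5 : R (m + 1) ≤ R s := hRmono _ _ (by omega)
            omega
          have e1 := haux0 (R (m + 1) + 1) (by omega) hy2
          have e2 : a (R (m + 1) + 1) = if (m + 1) % 2 = 0 then 1 else 0 := by
            have := hRlt (m + 1)
            exact hruns (m + 1) (R (m + 1) + 1) (by omega) (by omega)
          rw [e1] at e2
          split_ifs at e2 with h1 <;> omega
      -- m cannot be 0
      have hm_pos : 1 ≤ m := by
        by_contra hc
        have : m = 0 := by omega
        rw [this] at hbase
        simp at hbase
        omega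
      -- full run alignment from t = 1 on
      have hind1 : ∀ t, R (m + (1 + t)) = r + R (1 + t) := by
        intro t
        induction t with
        | zero => simpa using hbase
        | succ t ih =>
          have := hstep m (1 + t) hmE ih
          have harith : m + (1 + (t + 1)) = m + (1 + t) + 1 := by ring
          have harith2 : 1 + (t + 1) = 1 + t + 1 := by ring
          rw [harith, harith2, this]
      -- q (m + i) = q i for i ≥ 2
      have hqtail : ∀ i, 2 ≤ i → q (m + i) = q i := by
        intro i hi
        obtain ⟨i', rfl⟩ : ∃ i', i = i' + 2 := ⟨i - 2, by omega⟩
        have h1 : R (m + (i' + 2)) = R (m + (i' + 1)) + q (m + (i' + 2)) := by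
          have := hRs (m + (i' + 1))
          have harith : m + (i' + 1) + 1 = m + (i' + 2) := by ring
          rw [harith] at this
          exact this
        have h2 : R (m + (1 + (i' + 1))) = r + R (1 + (i' + 1)) := hind1 (i' + 1)
        have h3 : R (m + (1 + i')) = r + R (1 + i') := hind1 i'
        have h4 : R (i' + 2) = R (i' + 1) + q (i' + 2) := hRs (i' + 1)
        have ha5 : m + (1 + (i' + 1)) = m + (i' + 2) := by ring
        have ha6 : m + (1 + i') = m + (i' + 1) := by ring
        have ha7 : 1 + (i' + 1) = i' + 2 := by ring
        have ha8 : 1 + i' = i' + 1 := by ring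
        rw [ha5, ha7] at h2
        rw [ha6, ha8] at h3
        omega
      -- q (m+1) > q 1
      have hqm1 : q 1 < q (m + 1) := by
        have h1 := hRs m
        omega
      -- chain along j-periodicity: q (1 + s*j) = q 1
      have c1 : ∀ s, q (1 + s * j) = q 1 := by
        intro s
        induction s with
        | zero => simp
        | succ s ih =>
          have harith : 1 + (s + 1) * j = j + (1 + s * j) := by ring
          rw [harith, hjper (1 + s * j) (by omega)]
          exact ih
      -- chain along m-periodicity: q (1 + s*m) = q (1 + m) for s ≥ 1
      have c2 : ∀ s, q (1 + (s + 1) * m) = q (m + 1) := by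
        intro s
        induction s with
        | zero =>
          have harith : 1 + (0 + 1) * m = m + 1 := by ring
          rw [harith]
        | succ s ih =>
          have harith : 1 + (s + 1 + 1) * m = m + (1 + (s + 1) * m) := by ring
          rw [harith, hqtail (1 + (s + 1) * m) (by nlinarith)]
          exact ih
      have e1 := c1 m
      have e2 := c2 (j - 1)
      have harith : 1 + (j - 1 + 1) * m = 1 + m * j := by
        have : j - 1 + 1 = j := by omega
        rw [this]; ring
      rw [harith] at e2
      omega
end

section
/- Let Q^∞ = (q_1, q_2, ...) be the shift symmetric vector generated by Q = (q_1, ..., q_J, e_0) with respect to p, and define f_{2i} = q_{2i+1} + q_{2i+3} + ... + q_{2i+J} (sum of J terms at odd offsets) and λ_j as in the recursion. Then f_{2(i+1)} − λ_{2(i+1)} = f_{2i} − λ_{2i} for all i ≥ 0; consequently, if i > 0 and q_{2i+m} = q_m for all m ≥ 1, then λ_{2i} = p + 1. -/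
/-- For the shift symmetric vector with `f_{2i} = q_{2i+1} + q_{2i+3} + ⋯ + q_{2i+J}`:
`f_{2(i+1)} − λ_{2(i+1)} = f_{2i} − λ_{2i}` for all `i ≥ 0`; consequently, if `i > 0`
and `q_{2i+m} = q_m` for all `m ≥ 1`, then `λ_{2i} = p + 1`. -/
theorem shiftSymmetric_invariant (J : ℕ) (hJ1 : 1 ≤ J) (hJodd : J % 2 = 1)
    (p : ℕ) (q s e lam : ℕ → ℤ)
    (hq : ∀ i, 1 ≤ i → i ≤ J → 1 ≤ q i)
    (he0 : 0 ≤ e 0)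
    (hlam0 : lam 0 = (p : ℤ) + 1)
    (hsE : ∀ j, j % 2 = 0 →
      s (j + 1) = min (q (j + 1)) (lam j) ∧ lam (j + 1) = lam j - s (j + 1))
    (hsO : ∀ j, j % 2 = 1 →
      s (j + 1) = min (q (j + 1)) ((p : ℤ) + 1 - lam j) ∧ lam (j + 1) = lam j + s (j + 1))
    (he : ∀ j, e (j + 1) = q (j + 1) - s (j + 1))
    (hqJ : ∀ j, q (J + j + 1) = e j + s (j + 1)) :
    (∀ i : ℕ,
      (∑ m ∈ Finset.range ((J + 1) / 2), q (2 * (i + 1) + 2 * m + 1)) - lam (2 * (i + 1)) =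
      (∑ m ∈ Finset.range ((J + 1) / 2), q (2 * i + 2 * m + 1)) - lam (2 * i)) ∧
    (∀ i : ℕ, 0 < i → (∀ m, 1 ≤ m → q (2 * i + m) = q m) → lam (2 * i) = (p : ℤ) + 1) := by
  have h2K : 2 * ((J + 1) / 2) = J + 1 := by omega
  set K := (J + 1) / 2 with hK
  have key : ∀ i : ℕ,
      (∑ m ∈ Finset.range K, q (2 * (i + 1) + 2 * m + 1)) - lam (2 * (i + 1)) =
      (∑ m ∈ Finset.range K, q (2 * i + 2 * m + 1)) - lam (2 * i) := by
    intro i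
    -- sum shift
    have hshift : (∑ m ∈ Finset.range K, q (2 * (i + 1) + 2 * m + 1))
        = ∑ m ∈ Finset.range K, (fun m => q (2 * i + 2 * m + 1)) (m + 1) := by
      refine Finset.sum_congr rfl fun m _ => ?_
      congr 1; omega
    have hsucc' := Finset.sum_range_succ' (fun m => q (2 * i + 2 * m + 1)) K
    have hsucc := Finset.sum_range_succ (fun m => q (2 * i + 2 * m + 1)) K
    have hsum : (∑ m ∈ Finset.range K, q (2 * (i + 1) + 2 * m + 1))
        = (∑ m ∈ Finset.range K, q (2 * i + 2 * m + 1))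
          + q (2 * i + 2 * K + 1) - q (2 * i + 0 + 1) := by
      rw [hshift]
      have : (∑ m ∈ Finset.range K, (fun m => q (2 * i + 2 * m + 1)) (m + 1))
          + q (2 * i + 2 * 0 + 1) = ∑ m ∈ Finset.range (K + 1), q (2 * i + 2 * m + 1) := by
        rw [hsucc']
      rw [hsucc] at this
      have e1 : 2 * i + 2 * 0 + 1 = 2 * i + 0 + 1 := by omega
      rw [e1] at this
      linarith
    -- lambda recursion
    have hE := hsE (2 * i) (by omega)
    have hO := hsO (2 * i + 1) (by omega)
    have hlam2 : lam (2 * (i + 1)) = lam (2 * i) - s (2 * i + 1) + s (2 * i + 1 + 1) := by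
      have e2 : 2 * (i + 1) = 2 * i + 1 + 1 := by omega
      rw [e2, hO.2, hE.2]
    -- q at shifted index
    have hq1 := hqJ (2 * i + 1)
    have he1 := he (2 * i)
    have e3 : 2 * i + 2 * K + 1 = J + (2 * i + 1) + 1 := by omega
    rw [hsum, hlam2, e3, hq1, he1]
    ring
  refine ⟨key, ?_⟩
  intro i _ hper
  have tele : ∀ n : ℕ, (∑ m ∈ Finset.range K, q (2 * n + 2 * m + 1)) - lam (2 * n)
      = (∑ m ∈ Finset.range K, q (2 * 0 + 2 * m + 1)) - lam (2 * 0) := by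
    intro n
    induction n with
    | zero => rfl
    | succ n ih => rw [key n, ih]
  have hsameF : (∑ m ∈ Finset.range K, q (2 * i + 2 * m + 1))
      = ∑ m ∈ Finset.range K, q (2 * 0 + 2 * m + 1) := by
    refine Finset.sum_congr rfl fun m _ => ?_
    have := hper (2 * m + 1) (by omega)
    have e4 : 2 * i + 2 * m + 1 = 2 * i + (2 * m + 1) := by omega
    have e5 : 2 * 0 + 2 * m + 1 = 2 * m + 1 := by omega
    rw [e4, e5, this]
  have := tele i
  rw [hsameF] at this
  have e6 : 2 * 0 = 0 := by omega
  rw [e6, hlam0] at this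
  linarith
end

section
/- Let A = a_1 ... a_n be a bit string with a_1 = 1 and even run-length decomposition A = 1_{v_1} 0_{v_2} ... 1_{v_J} 0_{v_{J+1}} giving V(A) = (v_1, ..., v_{J+1}) ∈ M. If A has a positive start string P of order p+1 ending in 1 (i.e., P is a prefix of A whose last bit is 1, with signed weight w̄(P) = p+1, and 0 < w̄(S) ≤ p+1 for every nonempty prefix S of P), then V(A) ∈ M_p^+. -/
/-- The alternating parameters of a vector `V = (v_1, v_2, ...)`:
`ρ_0 = 0`, `ρ_{i+1} = ρ_i + v_{i+1}` for even `i`, `ρ_{i+1} = ρ_i − v_{i+1}` for odd `i`. -/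
def altRho (v : ℕ → ℕ) : ℕ → ℤ
  | 0 => 0
  | i + 1 => altRho v i + (if i % 2 = 0 then (v (i + 1) : ℤ) else -(v (i + 1) : ℤ))

/-- If a bit string `A = a_1 ⋯ a_n` with `a_1 = 1` and run-length representation
`V(A) = (v_1, ..., v_{J+1})` has a positive start string of order `p+1` ending in 1,
then `V(A) ∈ M_p^+`. -/
theorem VA_mem_Mp_plus_of_positive_start (n : ℕ)
    (a : ℕ → ℕ) (hbit : ∀ i, a i ≤ 1) (ha1 : a 1 = 1)
    (J : ℕ) (hJ1 : 1 ≤ J) (hJodd : J % 2 = 1)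
    (v : ℕ → ℕ) (hv : ∀ i, 1 ≤ i → i ≤ J → 1 ≤ v i)
    (R : ℕ → ℕ) (hR0 : R 0 = 0) (hRs : ∀ j, R (j + 1) = R j + v (j + 1))
    (hRn : R (J + 1) = n)
    (hruns : ∀ j, j ≤ J → ∀ m, R j < m → m ≤ R (j + 1) →
      a m = if j % 2 = 0 then 1 else 0)
    (p : ℕ) (L : ℕ) (hL1 : 1 ≤ L) (hLn : L ≤ n) (haL : a L = 1)
    (hwP : (∑ m ∈ Finset.Icc 1 L, (2 * (a m : ℤ) - 1)) = (p : ℤ) + 1)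
    (hprefix : ∀ i, 1 ≤ i → i ≤ L →
      0 < (∑ m ∈ Finset.Icc 1 i, (2 * (a m : ℤ) - 1)) ∧
      (∑ m ∈ Finset.Icc 1 i, (2 * (a m : ℤ) - 1)) ≤ (p : ℤ) + 1) :
    ∃ t : ℕ, t % 2 = 1 ∧ 1 ≤ t ∧ t ≤ J ∧
      (∀ i, 1 ≤ i → i ≤ t → 0 < altRho v i) ∧ (p : ℤ) + 1 ≤ altRho v t := by
  classical
  set f : ℕ → ℤ := fun m => 2 * (a m : ℤ) - 1 with hf
  have hIcc : ∀ i : ℕ, Finset.Icc 1 i = Finset.Ioc 0 i := by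
    intro i; ext m; simp [Nat.lt_iff_add_one_le]
  have hRmono : Monotone R := monotone_nat_of_le_succ (fun k => by rw [hRs]; omega)
  have key : ∀ k, k ≤ J → (∑ m ∈ Finset.Ioc 0 (R (k+1)), f m)
      = (∑ m ∈ Finset.Ioc 0 (R k), f m)
        + (if k % 2 = 0 then (v (k+1) : ℤ) else -(v (k+1) : ℤ)) := by
    intro k hk
    have h2 : R k ≤ R (k+1) := hRmono (Nat.le_succ k)
    rw [← Finset.sum_Ioc_consecutive _ (Nat.zero_le _) h2]
    congr 1
    have hconst : ∀ m ∈ Finset.Ioc (R k) (R (k+1)),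
        f m = (if k % 2 = 0 then (1:ℤ) else -1) := by
      intro m hm
      simp only [Finset.mem_Ioc] at hm
      have h := hruns k hk m hm.1 hm.2
      by_cases hke : k % 2 = 0 <;> simp [hke] at h ⊢ <;> simp [hf, h]
    rw [Finset.sum_congr rfl hconst, Finset.sum_const, Nat.card_Ioc, hRs]
    by_cases hke : k % 2 = 0 <;> simp [hke]
  have hSR : ∀ k, k ≤ J + 1 → (∑ m ∈ Finset.Ioc 0 (R k), f m) = altRho v k := by
    intro k
    induction k with
    | zero => intro _; simp [hR0, altRho]
    | succ k ih =>
      intro hk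
      rw [key k (by omega), ih (by omega)]
      rfl
  -- find the run containing L
  obtain ⟨j, hjJ, hjlt, hjge⟩ : ∃ j, j ≤ J ∧ R j < L ∧ L ≤ R (j+1) := by
    by_contra h
    push_neg at h
    have hall : ∀ k, k ≤ J + 1 → R k < L := by
      intro k
      induction k with
      | zero => intro _; omega
      | succ k ih =>
        intro hk
        exact h k (by omega) (ih (by omega))
    have := hall (J+1) le_rfl
    omega
  have hjeven : j % 2 = 0 := by
    have h := hruns j hjJ L hjlt hjge
    by_cases hje : j % 2 = 0
    · exact hje
    · simp [hje] at h; omega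
  have hjJ' : j < J := by
    rcases Nat.lt_or_ge j J with h | h
    · exact h
    · omega
  refine ⟨j + 1, by omega, by omega, by omega, ?_, ?_⟩
  · -- positivity of altRho for 1 ≤ i ≤ j+1
    intro i hi1 hit
    rcases Nat.lt_or_ge i (j+1) with hij | hij
    · -- i ≤ j : use hprefix at R i
      have hRi1 : 1 ≤ R i := by
        have : R 1 ≤ R i := hRmono hi1
        have hR1 : R 1 = R 0 + v 1 := by simpa using hRs 0
        have := hv 1 le_rfl hJ1
        omega
      have hRiL : R i ≤ L := by
        have : R i ≤ R j := hRmono (by omega)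
        omega
      have hp := (hprefix (R i) hRi1 (le_of_lt (lt_of_le_of_lt (hRmono (by omega : i ≤ j)) hjlt))).1
      rw [hIcc] at hp
      rw [← hSR i (by omega)]
      exact hp
    · -- i = j + 1
      have : i = j + 1 := by omega
      subst this
      -- show p + 1 ≤ altRho v (j+1), hence positive
      have hineq : (p : ℤ) + 1 ≤ altRho v (j+1) := by
        rw [← hSR (j+1) (by omega),
          ← Finset.sum_Ioc_consecutive f (Nat.zero_le L) (hjge.trans (le_refl _))]
        have hL' : (∑ m ∈ Finset.Ioc 0 L, f m) = (p:ℤ) + 1 := by rw [← hIcc]; exact hwP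
        have hnonneg : 0 ≤ ∑ m ∈ Finset.Ioc L (R (j+1)), f m := by
          apply Finset.sum_nonneg
          intro m hm
          simp only [Finset.mem_Ioc] at hm
          have h := hruns j hjJ m (by omega) hm.2
          simp [hjeven] at h
          simp [hf, h]
        omega
      have : (0:ℤ) < (p:ℤ) + 1 := by positivity
      omega
  · -- p + 1 ≤ altRho v (j+1)
    rw [← hSR (j+1) (by omega),
      ← Finset.sum_Ioc_consecutive f (Nat.zero_le L) hjge]
    have hL' : (∑ m ∈ Finset.Ioc 0 L, f m) = (p:ℤ) + 1 := by rw [← hIcc]; exact hwP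
    have hnonneg : 0 ≤ ∑ m ∈ Finset.Ioc L (R (j+1)), f m := by
      apply Finset.sum_nonneg
      intro m hm
      simp only [Finset.mem_Ioc] at hm
      have h := hruns j hjJ m (by omega) hm.2
      simp [hjeven] at h
      simp [hf, h]
    omega
end
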